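/- Let V₁, V₂ : ℂ^m → ℂ^n be isometries, let |0⟩ ∈ ℂ² be a unit vector, and set V̂₁ = |0⟩ ⊗ V₁ and V̂₂ = (U_W ⊗ I)(|0⟩ ⊗ V₂) for a unitary U_W acting on ℂ² ⊗ ℂ^k (with n = k·n′ and appropriate tensor factorization ℂ^n = ℂ^k ⊗ ℂ^{n′}). Then V̂₁† V̂₂ = V₁†(W ⊗ I)V₂ where W = (⟨0|⊗I) U_W (|0⟩⊗I) is a contraction, and ‖V̂₁ − V̂₂‖² = 2‖I − Re(V₁†(W ⊗ I)V₂)‖. -/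

import Mathlib

/-!
Write `V̂₁ = E V₁` and `V̂₂ = (U ⊗ I) E V₂` with `E = |0⟩ ⊗ I`, an isometry. Compressing by `E`
turns `U ⊗ I` into `W ⊗ I`, which is the overlap formula, and a compression `Eᴴ U E` of a unitary
is a contraction. For isometries `A`, `B` one has `(A - B)ᴴ (A - B) = 2 - AᴴB - BᴴA`, and the
`C⋆`-identity `‖A - B‖² = ‖(A - B)ᴴ (A - B)‖` gives the norm formula.
-/

open scoped ComplexOrder Kronecker
open Matrix

noncomputable def opNorm {m n : Type*} [Fintype m] [Fintype n] [DecidableEq n]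
    (A : Matrix m n ℂ) : ℝ :=
  ‖(Matrix.toEuclideanLin A).toContinuousLinearMap‖

noncomputable def traceNorm {n : Type*} [Fintype n] [DecidableEq n] (A : Matrix n n ℂ) : ℝ :=
  (((Matrix.posSemidef_conjTranspose_mul_self A).1.eigenvectorUnitary : Matrix n n ℂ) *
    diagonal (((↑) : ℝ → ℂ) ∘ (√·) ∘ (Matrix.posSemidef_conjTranspose_mul_self A).1.eigenvalues) *
    (star (Matrix.posSemidef_conjTranspose_mul_self A).1.eigenvectorUnitary :
      Matrix n n ℂ)).trace.re

noncomputable def frobNorm {n : Type*} [Fintype n] (A : Matrix n n ℂ) : ℝ :=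
  Real.sqrt ((Aᴴ * A).trace.re)

open scoped Matrix.Norms.L2Operator
open Function

namespace Matrix

variable {𝕜 : Type*} [RCLike 𝕜] {l m n p : Type*}

def IsIsometry [Fintype m] [DecidableEq n] (A : Matrix m n 𝕜) : Prop := Aᴴ * A = 1

theorem IsIsometry.eq [Fintype m] [DecidableEq n] {A : Matrix m n 𝕜} (hA : A.IsIsometry) :
    Aᴴ * A = 1 := hA

theorem IsIsometry.mul [Fintype m] [Fintype n] [DecidableEq n] [DecidableEq l]
    {A : Matrix m n 𝕜} {B : Matrix n l 𝕜} (hA : A.IsIsometry) (hB : B.IsIsometry) :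
    (A * B).IsIsometry := by
  rw [IsIsometry, conjTranspose_mul, Matrix.mul_assoc, ← Matrix.mul_assoc Aᴴ, hA.eq,
    Matrix.one_mul, hB.eq]

theorem l2_opNorm_one_le [Fintype n] [DecidableEq n] : ‖(1 : Matrix n n 𝕜)‖ ≤ 1 := by
  rw [cstar_norm_def, map_one]
  exact ContinuousLinearMap.norm_id_le

theorem IsIsometry.l2_opNorm_le_one [Fintype m] [Fintype n] [DecidableEq n] {A : Matrix m n 𝕜}
    (hA : A.IsIsometry) : ‖A‖ ≤ 1 := by
  have h : ‖A‖ * ‖A‖ ≤ 1 := by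
    rw [← l2_opNorm_conjTranspose_mul_self, hA.eq]
    exact l2_opNorm_one_le
  nlinarith [norm_nonneg A]

theorem IsIsometry.l2_opNorm_sub_sq [Fintype m] [Fintype n] [DecidableEq n] {A B : Matrix m n 𝕜}
    (hA : A.IsIsometry) (hB : B.IsIsometry) :
    ‖A - B‖ ^ 2 = 2 * ‖(1 : Matrix n n 𝕜) - (1 / 2 : 𝕜) • (Aᴴ * B + (Aᴴ * B)ᴴ)‖ := by
  have hsq : (A - B)ᴴ * (A - B) = (2 : 𝕜) • (1 - (1 / 2 : 𝕜) • (Aᴴ * B + (Aᴴ * B)ᴴ)) := by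
    rw [conjTranspose_mul, conjTranspose_conjTranspose, conjTranspose_sub, Matrix.sub_mul,
      Matrix.mul_sub, Matrix.mul_sub, hA.eq, hB.eq]
    module
  rw [sq, ← l2_opNorm_conjTranspose_mul_self, hsq, norm_smul]
  norm_num

theorem conjTranspose_one_submatrix_mul_mul [Fintype m] [Fintype n] [DecidableEq m]
    [DecidableEq n] (A : Matrix m n 𝕜) (f : l → m) (g : p → n) :
    ((1 : Matrix m m 𝕜).submatrix id f)ᴴ * A * (1 : Matrix n n 𝕜).submatrix id g =
      A.submatrix f g := by
  ext i j
  simp [conjTranspose_submatrix, mul_apply, one_apply]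

theorem isIsometry_one_submatrix [Fintype m] [DecidableEq l] [DecidableEq m] {f : l → m}
    (hf : Injective f) : ((1 : Matrix m m 𝕜).submatrix id f).IsIsometry := by
  rw [IsIsometry, ← Matrix.mul_one (_ᴴ), conjTranspose_one_submatrix_mul_mul, submatrix_one _ hf]

theorem l2_opNorm_submatrix_le [Fintype l] [Fintype m] [Fintype n] [Fintype p] [DecidableEq l]
    [DecidableEq m] [DecidableEq n] [DecidableEq p] (A : Matrix m n 𝕜) {f : l → m} {g : p → n}
    (hf : Injective f) (hg : Injective g) : ‖A.submatrix f g‖ ≤ ‖A‖ := by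
  set E : Matrix m l 𝕜 := (1 : Matrix m m 𝕜).submatrix id f
  set F : Matrix n p 𝕜 := (1 : Matrix n n 𝕜).submatrix id g
  have hE : ‖Eᴴ‖ ≤ 1 := by
    rw [l2_opNorm_conjTranspose]
    exact (isIsometry_one_submatrix hf).l2_opNorm_le_one
  have hF : ‖F‖ ≤ 1 := (isIsometry_one_submatrix hg).l2_opNorm_le_one
  calc ‖A.submatrix f g‖ = ‖Eᴴ * A * F‖ := by rw [conjTranspose_one_submatrix_mul_mul]
    _ ≤ ‖Eᴴ‖ * ‖A‖ * ‖F‖ := by grw [l2_opNorm_mul, l2_opNorm_mul]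
    _ ≤ 1 * ‖A‖ * 1 := by gcongr
    _ = ‖A‖ := by ring

theorem one_submatrix_prodMk_mul {ι : Type*} [Fintype ι] [Fintype m] [DecidableEq ι]
    [DecidableEq m] (i₀ : ι) (V : Matrix m n 𝕜) :
    (1 : Matrix (ι × m) (ι × m) 𝕜).submatrix id (Prod.mk i₀) * V =
      of fun r j => (if r.1 = i₀ then 1 else 0) * V r.2 j := by
  ext ⟨i, a⟩ j
  simp [mul_apply, one_apply, Prod.ext_iff, ite_and]

theorem IsIsometry.submatrix_equiv [Fintype m] [Fintype n] [DecidableEq m] [DecidableEq n]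
    {U : Matrix n n 𝕜} (hU : U.IsIsometry) (e : m ≃ n) : (U.submatrix e e).IsIsometry := by
  rw [IsIsometry, conjTranspose_submatrix, submatrix_mul_equiv, hU.eq, submatrix_one_equiv]

end Matrix

/-- Qubit-augmented isometric extensions: `V̂₁†V̂₂ = V₁†(W ⊗ I)V₂` with `W` a contraction,
and `‖V̂₁ − V̂₂‖² = 2‖I − Re(V₁†(W ⊗ I)V₂)‖`. -/
theorem augmented_isometry_overlap {m k n' : ℕ}
    (V₁ V₂ : Matrix (Fin k × Fin n') (Fin m) ℂ)
    (hV₁ : V₁ᴴ * V₁ = 1) (hV₂ : V₂ᴴ * V₂ = 1)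
    (U : Matrix (Fin 2 × Fin k) (Fin 2 × Fin k) ℂ)
    (hU : U ∈ Matrix.unitaryGroup (Fin 2 × Fin k) ℂ)
    (Vh₁ Vh₂₀ : Matrix (Fin 2 × Fin k × Fin n') (Fin m) ℂ)
    (hVh₁ : Vh₁ = fun r j => (if r.1 = 0 then 1 else 0) * V₁ r.2 j)
    (hVh₂₀ : Vh₂₀ = fun r j => (if r.1 = 0 then 1 else 0) * V₂ r.2 j)
    (UI : Matrix (Fin 2 × Fin k × Fin n') (Fin 2 × Fin k × Fin n') ℂ)
    (hUI : UI = fun r c => U (r.1, r.2.1) (c.1, c.2.1) * (if r.2.2 = c.2.2 then 1 else 0))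
    (W : Matrix (Fin k) (Fin k) ℂ) (hW : W = fun e e' => U (0, e) (0, e'))
    (WI : Matrix (Fin k × Fin n') (Fin k × Fin n') ℂ)
    (hWI : WI = fun r c => W r.1 c.1 * (if r.2 = c.2 then 1 else 0)) :
    opNorm W ≤ 1 ∧
    Vh₁ᴴ * (UI * Vh₂₀) = V₁ᴴ * WI * V₂ ∧
    (opNorm (Vh₁ - UI * Vh₂₀)) ^ 2 =
      2 * opNorm ((1 : Matrix (Fin m) (Fin m) ℂ) -
        (1 / 2 : ℂ) • ((V₁ᴴ * WI * V₂) + (V₁ᴴ * WI * V₂)ᴴ)) := by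
  set E : Matrix (Fin 2 × Fin k × Fin n') (Fin k × Fin n') ℂ :=
    (1 : Matrix _ _ ℂ).submatrix id (Prod.mk (0 : Fin 2))
  have hE : E.IsIsometry := isIsometry_one_submatrix (Prod.mk_right_injective 0)
  have hUI_kronecker : UI = (U ⊗ₖ (1 : Matrix (Fin n') (Fin n') ℂ)).submatrix
      (Equiv.prodAssoc _ _ _).symm (Equiv.prodAssoc _ _ _).symm := hUI
  have hUI_isometry : UI.IsIsometry :=
    hUI_kronecker ▸ IsIsometry.submatrix_equiv (kronecker_mem_unitary hU (one_mem _)).1 _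
  have hWI_compression : WI = UI.submatrix (Prod.mk 0) (Prod.mk 0) := by
    rw [hWI, hW, hUI]; rfl
  obtain rfl : Vh₁ = E * V₁ := hVh₁.trans (one_submatrix_prodMk_mul 0 V₁).symm
  obtain rfl : Vh₂₀ = E * V₂ := hVh₂₀.trans (one_submatrix_prodMk_mul 0 V₂).symm
  have overlap : (E * V₁)ᴴ * (UI * (E * V₂)) = V₁ᴴ * WI * V₂ := by
    rw [hWI_compression, ← conjTranspose_one_submatrix_mul_mul]
    simp only [E, conjTranspose_mul, Matrix.mul_assoc]
  refine ⟨?_, overlap, ?_⟩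
  · calc opNorm W = ‖U.submatrix (Prod.mk 0) (Prod.mk 0)‖ := by rw [hW]; rfl
      _ ≤ ‖U‖ := l2_opNorm_submatrix_le U (Prod.mk_right_injective 0) (Prod.mk_right_injective 0)
      _ ≤ 1 := IsIsometry.l2_opNorm_le_one hU.1
  · rw [← overlap]
    exact (hE.mul hV₁).l2_opNorm_sub_sq (hUI_isometry.mul (hE.mul hV₂))
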